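/- Let s ∈ ℝ and let a, b ∈ ℝ with a ≤ s < b. Then |g_s(b) − g_s(a) − (a·g_s(a) + 1 − Φ(s))·(b − a) + (b − s)| ≤ 2·(√(2π)/4 + |a| + (b − a))·(b − a)². -/

import Mathlib

/-!
On each side of `s`, `g_s` solves the Stein equation `g' = w g + 𝟙(w ≤ s) - Φ(s)`. Its closed form
`g_s(w) = √(2π) e^{w²/2} Φ(min w s) Φ(-max w s)` is dominated by `√(2π) e^{w²/2} Φ(-|w|)`, so the
Mills-ratio bounds give `0 ≤ g_s ≤ √(2π)/2` and `|w| g_s(w) ≤ 1`. Hence `|g_s'| ≤ 2` off `s`, and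
`|w g_s(w) - a g_s(a)| ≤ (√(2π)/2 + 2|a|)(w - a)` for `w ≥ a`. Since
`w ↦ g_s(w) - (a g_s(a) - Φ(s)) w - min w s` is continuous with derivative
`w g_s(w) - a g_s(a)` off `s`, the quantity to be bounded is
`|∫_a^b (w g_s(w) - a g_s(a)) dw| ≤ (√(2π)/2 + 2|a|)(b - a)²/2`.
-/

open MeasureTheory

noncomputable def Phi (s : ℝ) : ℝ :=
  ((ProbabilityTheory.gaussianReal 0 1) (Set.Iic s)).toReal

noncomputable def steinG (s w : ℝ) : ℝ :=
  Real.exp (w ^ 2 / 2) *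
    ∫ u in Set.Iic w, ((if u ≤ s then (1 : ℝ) else 0) - Phi s) * Real.exp (-u ^ 2 / 2)

open Real Set Filter Topology ProbabilityTheory

section PrimitiveIic

variable {E : Type*} [NormedAddCommGroup E] [NormedSpace ℝ E] {f : ℝ → E}

theorem integral_Iic_eq_add_intervalIntegral (hf : Integrable f) (a x : ℝ) :
    ∫ u in Iic x, f u = (∫ u in Iic a, f u) + ∫ u in a..x, f u := by
  rw [← intervalIntegral.integral_Iic_sub_Iic hf.integrableOn hf.integrableOn, add_sub_cancel]

theorem continuous_integral_Iic (hf : Integrable f) : Continuous fun x => ∫ u in Iic x, f u := by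
  rw [funext (integral_Iic_eq_add_intervalIntegral hf 0)]
  exact continuous_const.add
    (intervalIntegral.continuous_primitive (fun _ _ => hf.intervalIntegrable) 0)

theorem hasDerivAt_integral_Iic [CompleteSpace E] (hf : Integrable f) {x : ℝ}
    (hx : ContinuousAt f x) : HasDerivAt (fun x => ∫ u in Iic x, f u) (f x) x := by
  rw [funext (integral_Iic_eq_add_intervalIntegral hf 0)]
  exact (intervalIntegral.integral_hasDerivAt_right hf.intervalIntegrable
    hf.aestronglyMeasurable.stronglyMeasurableAtFilter hx).const_add _

end PrimitiveIic

theorem abs_intervalIntegral_le_of_abs_le_mul_sub {f : ℝ → ℝ} {a b K : ℝ} (hab : a ≤ b)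
    (hf : ∀ w ∈ Ioc a b, |f w| ≤ K * (w - a)) : |∫ w in a..b, f w| ≤ K * (b - a) ^ 2 / 2 := by
  rw [← Real.norm_eq_abs]
  refine (intervalIntegral.norm_integral_le_of_norm_le hab
    (ae_of_all _ fun w hw => (Real.norm_eq_abs _).trans_le (hf w hw))
    ((continuous_const.mul (continuous_id.sub continuous_const)).intervalIntegrable a b))
    |>.trans_eq ?_
  rw [intervalIntegral.integral_const_mul, intervalIntegral.integral_comp_sub_right (fun x => x),
    integral_id]
  ring

theorem eventuallyEq_ite_le_nhds {s w : ℝ} (hw : w ≠ s) :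
    (fun u : ℝ => if u ≤ s then (1 : ℝ) else 0) =ᶠ[𝓝 w] fun _ => if w ≤ s then 1 else 0 := by
  rcases hw.lt_or_gt with h | h
  · filter_upwards [eventually_lt_nhds h] with u hu
    simp [hu.le, h.le]
  · filter_upwards [eventually_gt_nhds h] with u hu
    simp [not_le.2 hu, not_le.2 h]

theorem hasDerivAt_min_const {s w : ℝ} (hw : w ≠ s) :
    HasDerivAt (fun x => min x s) (if w ≤ s then 1 else 0) w := by
  rcases hw.lt_or_gt with h | h
  · rw [if_pos h.le]
    refine (hasDerivAt_id w).congr_of_eventuallyEq ?_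
    filter_upwards [eventually_lt_nhds h] with u hu
    exact min_eq_left hu.le
  · rw [if_neg (not_le.2 h)]
    refine (hasDerivAt_const w s).congr_of_eventuallyEq ?_
    filter_upwards [eventually_gt_nhds h] with u hu
    exact min_eq_right hu.le

theorem exp_sq_div_two_mul_exp_neg (x : ℝ) : exp (x ^ 2 / 2) * exp (-x ^ 2 / 2) = 1 := by
  rw [← exp_add, neg_div, add_neg_cancel, exp_zero]

theorem integrable_exp_neg_sq_div_two : Integrable fun u : ℝ => exp (-u ^ 2 / 2) := by
  simpa [div_eq_inv_mul] using integrable_exp_neg_mul_sq (b := 1 / 2) (by norm_num)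

theorem integral_exp_neg_sq_div_two : ∫ u : ℝ, exp (-u ^ 2 / 2) = √(2 * π) := by
  have := integral_gaussian (1 / 2)
  simp only [one_div, div_inv_eq_mul] at this
  rw [mul_comm, ← this]
  congr 1 with u
  ring_nf

theorem integrable_neg_mul_exp_neg_sq_div_two :
    Integrable fun u : ℝ => -u * exp (-u ^ 2 / 2) := by
  simpa [div_eq_inv_mul] using (integrable_mul_exp_neg_mul_sq (b := 1 / 2) (by norm_num)).neg

theorem integral_Iic_neg_mul_exp_neg_sq_div_two (x : ℝ) :
    ∫ u in Iic x, -u * exp (-u ^ 2 / 2) = exp (-x ^ 2 / 2) := by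
  have hderiv (u : ℝ) : HasDerivAt (fun u : ℝ => exp (-u ^ 2 / 2)) (-u * exp (-u ^ 2 / 2)) u := by
    convert ((hasDerivAt_pow 2 u).fun_neg.div_const 2).exp using 1
    simp only [Nat.cast_ofNat]
    ring
  have hsq : Tendsto (fun u : ℝ => u ^ 2) atBot atTop :=
    ((tendsto_pow_atTop (α := ℝ) two_ne_zero).comp tendsto_neg_atBot_atTop).congr fun u => by simp
  have hlim : Tendsto (fun u : ℝ => exp (-u ^ 2 / 2)) atBot (𝓝 0) :=
    tendsto_exp_comp_nhds_zero.2 ((tendsto_neg_atTop_atBot.comp hsq).atBot_div_const two_pos)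
  rw [integral_Iic_of_hasDerivAt_of_tendsto' (fun u _ => hderiv u)
    integrable_neg_mul_exp_neg_sq_div_two.integrableOn hlim, sub_zero]

theorem integral_Iic_exp_neg_sq_div_two (x : ℝ) :
    ∫ u in Iic x, exp (-u ^ 2 / 2) = √(2 * π) * Phi x := by
  rw [Phi, gaussianReal_apply_eq_integral 0 one_ne_zero, ENNReal.toReal_ofReal
    (setIntegral_nonneg measurableSet_Iic fun u _ => gaussianPDFReal_nonneg 0 1 u)]
  simp only [gaussianPDFReal_def, NNReal.coe_one, mul_one, sub_zero, integral_const_mul]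
  rw [← mul_assoc, mul_inv_cancel₀ (by positivity), one_mul]

theorem Phi_nonneg (x : ℝ) : 0 ≤ Phi x := measureReal_nonneg

theorem Phi_le_one (x : ℝ) : Phi x ≤ 1 := measureReal_le_one

theorem monotone_Phi : Monotone Phi := fun _ _ h => measureReal_mono (Iic_subset_Iic.2 h)

theorem Phi_neg (x : ℝ) : Phi (-x) = 1 - Phi x := by
  have hsplit := intervalIntegral.integral_Iic_add_Ioi (b := x)
    integrable_exp_neg_sq_div_two.integrableOn integrable_exp_neg_sq_div_two.integrableOn
  have hreflect := integral_comp_neg_Iic (-x) fun u => exp (-u ^ 2 / 2)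
  simp only [neg_sq, neg_neg] at hreflect
  rw [← hreflect, integral_exp_neg_sq_div_two, integral_Iic_exp_neg_sq_div_two,
    integral_Iic_exp_neg_sq_div_two] at hsplit
  have : 0 < √(2 * π) := by positivity
  field_simp at hsplit ⊢
  linarith

theorem Phi_zero : Phi 0 = 1 / 2 := by
  have := Phi_neg 0
  rw [neg_zero] at this
  linarith

theorem integral_Iic_exp_neg_sq_div_two_comp_sub (x : ℝ) :
    ∫ u in Iic x, exp (-(u - x) ^ 2 / 2) = √(2 * π) / 2 := by
  have h := (measurePreserving_sub_right volume x).setIntegral_preimage_emb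
    (measurableEmbedding_subRight x) (fun v => exp (-v ^ 2 / 2)) (Iic 0)
  rw [preimage_sub_const_Iic, zero_add] at h
  rw [h, integral_Iic_exp_neg_sq_div_two, Phi_zero]
  ring

theorem neg_mul_exp_mul_Phi_le (x : ℝ) : -x * (exp (x ^ 2 / 2) * Phi x) ≤ (√(2 * π))⁻¹ := by
  have hdom : -x * ∫ u in Iic x, exp (-u ^ 2 / 2) ≤ ∫ u in Iic x, -u * exp (-u ^ 2 / 2) := by
    rw [← integral_const_mul]
    refine setIntegral_mono_on (integrable_exp_neg_sq_div_two.const_mul _).integrableOn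
      ?_ measurableSet_Iic fun u (hu : u ≤ x) => ?_
    · exact integrable_neg_mul_exp_neg_sq_div_two.integrableOn
    · exact mul_le_mul_of_nonneg_right (neg_le_neg hu) (exp_pos _).le
  rw [integral_Iic_neg_mul_exp_neg_sq_div_two, integral_Iic_exp_neg_sq_div_two] at hdom
  have : 0 < √(2 * π) := by positivity
  calc -x * (exp (x ^ 2 / 2) * Phi x) = exp (x ^ 2 / 2) * (-x * (√(2 * π) * Phi x)) / √(2 * π) := by
        field_simp
    _ ≤ exp (x ^ 2 / 2) * exp (-x ^ 2 / 2) / √(2 * π) := by gcongr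
    _ = (√(2 * π))⁻¹ := by rw [exp_sq_div_two_mul_exp_neg, one_div]

theorem exp_mul_Phi_le_half {x : ℝ} (hx : x ≤ 0) : exp (x ^ 2 / 2) * Phi x ≤ 1 / 2 := by
  have hdom : ∫ u in Iic x, exp (-u ^ 2 / 2) ≤
      ∫ u in Iic x, exp (-x ^ 2 / 2) * exp (-(u - x) ^ 2 / 2) := by
    refine setIntegral_mono_on integrable_exp_neg_sq_div_two.integrableOn
      ((integrable_exp_neg_sq_div_two.comp_sub_right x).const_mul _).integrableOn
      measurableSet_Iic fun u (hu : u ≤ x) => ?_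
    rw [← exp_add, exp_le_exp]
    nlinarith [mul_nonneg (neg_nonneg.2 hx) (sub_nonneg.2 hu)]
  rw [integral_const_mul, integral_Iic_exp_neg_sq_div_two_comp_sub,
    integral_Iic_exp_neg_sq_div_two] at hdom
  have : 0 < √(2 * π) := by positivity
  calc exp (x ^ 2 / 2) * Phi x = exp (x ^ 2 / 2) * (√(2 * π) * Phi x) / √(2 * π) := by field_simp
    _ ≤ exp (x ^ 2 / 2) * (exp (-x ^ 2 / 2) * (√(2 * π) / 2)) / √(2 * π) := by gcongr
    _ = 1 / 2 := by rw [← mul_assoc, exp_sq_div_two_mul_exp_neg]; field_simp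

theorem steinG_eq (s w : ℝ) :
    steinG s w = √(2 * π) * exp (w ^ 2 / 2) * (Phi (min w s) * Phi (-max w s)) := by
  have hintegrand : (fun u => ((if u ≤ s then (1 : ℝ) else 0) - Phi s) * exp (-u ^ 2 / 2)) =
      fun u => (Iic s).indicator (fun u => exp (-u ^ 2 / 2)) u - Phi s * exp (-u ^ 2 / 2) := by
    ext u
    simp only [indicator_apply, mem_Iic]
    split_ifs <;> ring
  have hPhi : Phi (min w s) - Phi s * Phi w = Phi (min w s) * Phi (-max w s) := by
    rcases le_total w s with h | h
    · rw [min_eq_left h, max_eq_right h, Phi_neg]; ring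
    · rw [min_eq_right h, max_eq_left h, Phi_neg]; ring
  rw [steinG, hintegrand, integral_sub
    (integrable_exp_neg_sq_div_two.indicator measurableSet_Iic).integrableOn
    (integrable_exp_neg_sq_div_two.const_mul _).integrableOn,
    setIntegral_indicator measurableSet_Iic, Iic_inter_Iic, integral_const_mul, integral_Iic_exp_neg_sq_div_two,
    integral_Iic_exp_neg_sq_div_two, ← hPhi]
  ring

theorem steinG_nonneg (s w : ℝ) : 0 ≤ steinG s w := by
  rw [steinG_eq]
  exact mul_nonneg (by positivity) (mul_nonneg (Phi_nonneg _) (Phi_nonneg _))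

theorem steinG_le_exp_mul_Phi_neg_abs (s w : ℝ) :
    steinG s w ≤ √(2 * π) * exp (w ^ 2 / 2) * Phi (-|w|) := by
  rw [steinG_eq]
  gcongr
  rcases le_total 0 w with h | h
  · rw [abs_of_nonneg h]
    exact (mul_le_mul (Phi_le_one _) (monotone_Phi (neg_le_neg (le_max_left w s))) (Phi_nonneg _)
      zero_le_one).trans_eq (one_mul _)
  · rw [abs_of_nonpos h, neg_neg]
    exact (mul_le_mul (monotone_Phi (min_le_left w s)) (Phi_le_one _) (Phi_nonneg _)
      (Phi_nonneg _)).trans_eq (mul_one _)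

theorem steinG_le (s w : ℝ) : steinG s w ≤ √(2 * π) / 2 := by
  have h := exp_mul_Phi_le_half (neg_nonpos.2 (abs_nonneg w))
  rw [neg_sq, sq_abs] at h
  calc steinG s w ≤ √(2 * π) * (exp (w ^ 2 / 2) * Phi (-|w|)) := by
        rw [← mul_assoc]; exact steinG_le_exp_mul_Phi_neg_abs s w
    _ ≤ √(2 * π) * (1 / 2) := by gcongr
    _ = √(2 * π) / 2 := by ring

theorem abs_mul_steinG_le (s w : ℝ) : |w| * steinG s w ≤ 1 := by
  have h := neg_mul_exp_mul_Phi_le (-|w|)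
  rw [neg_neg, neg_sq, sq_abs] at h
  have : 0 < √(2 * π) := by positivity
  calc |w| * steinG s w ≤ √(2 * π) * (|w| * (exp (w ^ 2 / 2) * Phi (-|w|))) := by
        refine (mul_le_mul_of_nonneg_left (steinG_le_exp_mul_Phi_neg_abs s w)
          (abs_nonneg w)).trans_eq ?_
        ring
    _ ≤ √(2 * π) * (√(2 * π))⁻¹ := by gcongr
    _ = 1 := mul_inv_cancel₀ this.ne'

theorem integrable_steinG_integrand (s : ℝ) :
    Integrable fun u => ((if u ≤ s then (1 : ℝ) else 0) - Phi s) * exp (-u ^ 2 / 2) := by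
  refine ((integrable_exp_neg_sq_div_two.indicator (measurableSet_Iic (a := s))).sub
    (integrable_exp_neg_sq_div_two.const_mul (Phi s))).congr (ae_of_all _ fun u => ?_)
  simp only [Pi.sub_apply, indicator_apply, mem_Iic]
  split_ifs <;> ring

theorem continuous_steinG (s : ℝ) : Continuous (steinG s) :=
  (continuous_exp.comp (by fun_prop)).mul (continuous_integral_Iic (integrable_steinG_integrand s))

noncomputable def steinGDeriv (s w : ℝ) : ℝ :=
  w * steinG s w + (if w ≤ s then 1 else 0) - Phi s

theorem hasDerivAt_steinG {s w : ℝ} (hw : w ≠ s) : HasDerivAt (steinG s) (steinGDeriv s w) w := by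
  have hexp : HasDerivAt (fun x => exp (x ^ 2 / 2)) (w * exp (w ^ 2 / 2)) w := by
    convert ((hasDerivAt_pow 2 w).div_const 2).exp using 1
    simp only [Nat.cast_ofNat]
    ring
  have hcont : ContinuousAt
      (fun u => ((if u ≤ s then (1 : ℝ) else 0) - Phi s) * exp (-u ^ 2 / 2)) w :=
    ((continuousAt_const.congr (eventuallyEq_ite_le_nhds hw).symm).sub continuousAt_const).mul
      (by fun_prop)
  refine (hexp.mul (hasDerivAt_integral_Iic (integrable_steinG_integrand s) hcont)).congr_deriv ?_
  rw [steinGDeriv, steinG]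
  linear_combination ((if w ≤ s then (1 : ℝ) else 0) - Phi s) * exp_sq_div_two_mul_exp_neg w

theorem abs_steinGDeriv_le (s w : ℝ) : |steinGDeriv s w| ≤ 2 := by
  have hmul : |w * steinG s w| ≤ 1 := by
    rw [abs_mul, abs_of_nonneg (steinG_nonneg s w)]
    exact abs_mul_steinG_le s w
  have hjump : |(if w ≤ s then (1 : ℝ) else 0) - Phi s| ≤ 1 := by
    have := Phi_nonneg s
    have := Phi_le_one s
    split_ifs <;> rw [abs_le] <;> constructor <;> linarith
  rw [steinGDeriv, add_sub_assoc]
  linarith [abs_add_le (w * steinG s w) ((if w ≤ s then (1 : ℝ) else 0) - Phi s)]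

theorem intervalIntegrable_steinGDeriv (s a b : ℝ) :
    IntervalIntegrable (steinGDeriv s) volume a b := by
  have hmeas : Measurable (steinGDeriv s) :=
    ((continuous_id.mul (continuous_steinG s)).measurable.add
      (Measurable.ite measurableSet_Iic measurable_const measurable_const)).sub measurable_const
  refine (intervalIntegrable_const (c := (2 : ℝ))).mono_fun hmeas.aestronglyMeasurable
    (ae_of_all _ fun w => ?_)
  simpa using abs_steinGDeriv_le s w

theorem steinG_sub_eq_integral (s a b : ℝ) :
    steinG s b - steinG s a = ∫ w in a..b, steinGDeriv s w :=
  (integral_eq_of_hasDerivAt_off_countable _ _ (countable_singleton s)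
    (continuous_steinG s).continuousOn (fun _ hw => hasDerivAt_steinG hw.2)
    (intervalIntegrable_steinGDeriv s a b)).symm

theorem abs_steinG_sub_le (s a b : ℝ) : |steinG s b - steinG s a| ≤ 2 * |b - a| := by
  rw [steinG_sub_eq_integral, ← Real.norm_eq_abs]
  exact intervalIntegral.norm_integral_le_of_norm_le_const fun w _ =>
    (Real.norm_eq_abs _).trans_le (abs_steinGDeriv_le s w)

theorem abs_mul_steinG_sub_le (s : ℝ) {a w : ℝ} (haw : a ≤ w) :
    |w * steinG s w - a * steinG s a| ≤ (√(2 * π) / 2 + 2 * |a|) * (w - a) := by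
  have hlip := abs_steinG_sub_le s a w
  rw [abs_of_nonneg (sub_nonneg.2 haw)] at hlip
  calc |w * steinG s w - a * steinG s a|
        = |(w - a) * steinG s w + a * (steinG s w - steinG s a)| := by ring_nf
    _ ≤ (w - a) * steinG s w + |a| * |steinG s w - steinG s a| := by
        refine (abs_add_le _ _).trans ?_
        rw [abs_mul, abs_mul, abs_of_nonneg (sub_nonneg.2 haw), abs_of_nonneg (steinG_nonneg s w)]
    _ ≤ (w - a) * (√(2 * π) / 2) + |a| * (2 * (w - a)) := by
        gcongr
        exact steinG_le s w
    _ = (√(2 * π) / 2 + 2 * |a|) * (w - a) := by ring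

theorem steinG_taylor_remainder_eq {s a b : ℝ} (ha : a ≤ s) (hb : s ≤ b) :
    steinG s b - steinG s a - (a * steinG s a + 1 - Phi s) * (b - a) + (b - s) =
      ∫ w in a..b, (w * steinG s w - a * steinG s a) := by
  set c := a * steinG s a - Phi s
  have hderiv : ∀ w ∈ Ioo (min a b) (max a b) \ {s},
      HasDerivAt (fun x => steinG s x - c * x - min x s) (w * steinG s w - a * steinG s a) w := by
    intro w hw
    refine (((hasDerivAt_steinG hw.2).sub ((hasDerivAt_id w).const_mul c)).sub
      (hasDerivAt_min_const hw.2)).congr_deriv ?_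
    rw [steinGDeriv]
    ring
  rw [integral_eq_of_hasDerivAt_off_countable (fun x => steinG s x - c * x - min x s) _
    (countable_singleton s)
    (((continuous_steinG s).sub (continuous_const.mul continuous_id)).sub
      (continuous_id.min continuous_const)).continuousOn hderiv
    (((continuous_id.mul (continuous_steinG s)).sub continuous_const).intervalIntegrable a b),
    min_eq_right hb, min_eq_left ha]
  ring

/-- Taylor-type estimate for the Stein solution across the singularity, case `a ≤ s < b`. -/
theorem steinG_taylor_cross_up (s a b : ℝ) (ha : a ≤ s) (hb : s < b) :
    |steinG s b - steinG s a - (a * steinG s a + 1 - Phi s) * (b - a) + (b - s)| ≤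
      2 * (Real.sqrt (2 * Real.pi) / 4 + |a| + (b - a)) * (b - a) ^ 2 := by
  have hab : 0 ≤ b - a := by linarith
  rw [steinG_taylor_remainder_eq ha hb.le]
  calc |∫ w in a..b, (w * steinG s w - a * steinG s a)|
        ≤ (√(2 * π) / 2 + 2 * |a|) * (b - a) ^ 2 / 2 :=
        abs_intervalIntegral_le_of_abs_le_mul_sub (by linarith)
          fun w hw => abs_mul_steinG_sub_le s hw.1.le
    _ ≤ 2 * (√(2 * π) / 4 + |a| + (b - a)) * (b - a) ^ 2 := by
        have : 0 ≤ √(2 * π) / 4 + |a| := by positivity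
        nlinarith [pow_nonneg hab 3, mul_nonneg this (sq_nonneg (b - a))]
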